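/- In intuitionistic propositional logic extended with the linearity axiom scheme LIN, for all formulas γ, δ₁, δ₂ the formula (γ → (δ₁ ∨ δ₂)) → ((γ → δ₁) ∨ (γ → δ₂)) is provable. -/

import Mathlib

/-!
Work in the theory with the extra hypothesis `γ → δ₁ ∨ δ₂` and split on the LIN instance
`(δ₁ → δ₂) ∨ (δ₂ → δ₁)`. If `δ₁ → δ₂`, then `δ₁ ∨ δ₂ → δ₂`, so `γ → δ₂`; symmetrically, if
`δ₂ → δ₁` then `γ → δ₁`. The deduction theorem turns the hypotheses back into implications.
-/

/-- Propositional formulas over countably many atoms with `→`, `∧`, `∨`, `⊥`. -/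
inductive PForm : Type
  | atom : ℕ → PForm
  | bot : PForm
  | imp : PForm → PForm → PForm
  | and : PForm → PForm → PForm
  | or : PForm → PForm → PForm

open PForm

/-- Hilbert-style provability for intuitionistic propositional logic,
extended by an arbitrary set `Ax` of extra axioms, with modus ponens as the
only inference rule. -/
inductive HilbertProv (Ax : PForm → Prop) : PForm → Prop
  | extra {φ} : Ax φ → HilbertProv Ax φ
  | k (φ ψ) : HilbertProv Ax (imp φ (imp ψ φ))
  | s (φ ψ χ) : HilbertProv Ax
      (imp (imp φ (imp ψ χ)) (imp (imp φ ψ) (imp φ χ)))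
  | andIntro (φ ψ) : HilbertProv Ax (imp φ (imp ψ (and φ ψ)))
  | andElimL (φ ψ) : HilbertProv Ax (imp (and φ ψ) φ)
  | andElimR (φ ψ) : HilbertProv Ax (imp (and φ ψ) ψ)
  | orIntroL (φ ψ) : HilbertProv Ax (imp φ (or φ ψ))
  | orIntroR (φ ψ) : HilbertProv Ax (imp ψ (or φ ψ))
  | orElim (φ ψ χ) : HilbertProv Ax
      (imp (imp φ χ) (imp (imp ψ χ) (imp (or φ ψ) χ)))
  | exFalso (φ) : HilbertProv Ax (imp bot φ)
  | mp {φ ψ} : HilbertProv Ax (imp φ ψ) → HilbertProv Ax φ → HilbertProv Ax ψ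

/-- The linearity axiom scheme LIN: all formulas of the form
`(φ → ψ) ∨ (ψ → φ)`. -/
def LINScheme : PForm → Prop :=
  fun f => ∃ φ ψ : PForm, f = or (imp φ ψ) (imp ψ φ)

def withHyp (Ax : PForm → Prop) (φ : PForm) : PForm → Prop := fun f => Ax f ∨ f = φ

namespace HilbertProv

variable {Ax : PForm → Prop} {φ ψ χ : PForm}

theorem mono {Ax' : PForm → Prop} (h : ∀ f, Ax f → Ax' f) (hp : HilbertProv Ax ψ) :
    HilbertProv Ax' ψ := by
  induction hp with
  | extra ha => exact extra (h _ ha)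
  | k φ ψ => exact k φ ψ
  | s φ ψ χ => exact s φ ψ χ
  | andIntro φ ψ => exact andIntro φ ψ
  | andElimL φ ψ => exact andElimL φ ψ
  | andElimR φ ψ => exact andElimR φ ψ
  | orIntroL φ ψ => exact orIntroL φ ψ
  | orIntroR φ ψ => exact orIntroR φ ψ
  | orElim φ ψ χ => exact orElim φ ψ χ
  | exFalso φ => exact exFalso φ
  | mp _ _ ih₁ ih₂ => exact mp ih₁ ih₂

theorem weaken (hp : HilbertProv Ax ψ) : HilbertProv (withHyp Ax φ) ψ :=
  mono (fun _ => Or.inl) hp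

theorem hyp : HilbertProv (withHyp Ax φ) φ :=
  extra (Or.inr rfl)

theorem imp_self (φ : PForm) : HilbertProv Ax (imp φ φ) :=
  mp (mp (s φ (imp φ φ) φ) (k φ (imp φ φ))) (k φ φ)

theorem deduction (h : HilbertProv (withHyp Ax φ) ψ) : HilbertProv Ax (imp φ ψ) := by
  induction h with
  | @extra f ha =>
    rcases ha with ha | rfl
    · exact mp (k f φ) (extra ha)
    · exact imp_self _
  | k a b => exact mp (k _ φ) (k a b)
  | s a b c => exact mp (k _ φ) (s a b c)
  | andIntro a b => exact mp (k _ φ) (andIntro a b)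
  | andElimL a b => exact mp (k _ φ) (andElimL a b)
  | andElimR a b => exact mp (k _ φ) (andElimR a b)
  | orIntroL a b => exact mp (k _ φ) (orIntroL a b)
  | orIntroR a b => exact mp (k _ φ) (orIntroR a b)
  | orElim a b c => exact mp (k _ φ) (orElim a b c)
  | exFalso a => exact mp (k _ φ) (exFalso a)
  | @mp a b _ _ ih₁ ih₂ => exact mp (mp (s φ a b) ih₁) ih₂

theorem imp_trans (h₁ : HilbertProv Ax (imp φ ψ)) (h₂ : HilbertProv Ax (imp ψ χ)) :
    HilbertProv Ax (imp φ χ) :=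
  deduction (mp (weaken h₂) (mp (weaken h₁) hyp))

theorem or_imp (h₁ : HilbertProv Ax (imp φ χ)) (h₂ : HilbertProv Ax (imp ψ χ)) :
    HilbertProv Ax (imp (or φ ψ) χ) :=
  mp (mp (orElim φ ψ χ) h₁) h₂

theorem or_elim (h₁ : HilbertProv Ax (imp φ χ)) (h₂ : HilbertProv Ax (imp ψ χ))
    (h : HilbertProv Ax (or φ ψ)) : HilbertProv Ax χ :=
  mp (or_imp h₁ h₂) h

end HilbertProv

open HilbertProv in
/-- In intuitionistic propositional logic extended with the linearity axiom
scheme LIN, the formula `(γ → (δ₁ ∨ δ₂)) → ((γ → δ₁) ∨ (γ → δ₂))` is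
provable for all formulas `γ`, `δ₁`, `δ₂`. -/
theorem lin_proves_imp_or_split (γ δ₁ δ₂ : PForm) :
    HilbertProv LINScheme
      (PForm.imp (PForm.imp γ (PForm.or δ₁ δ₂))
        (PForm.or (PForm.imp γ δ₁) (PForm.imp γ δ₂))) := by
  apply deduction
  have hLIN : HilbertProv (withHyp LINScheme (imp γ (or δ₁ δ₂))) (or (imp δ₁ δ₂) (imp δ₂ δ₁)) :=
    extra (Or.inl ⟨δ₁, δ₂, rfl⟩)
  refine or_elim (deduction ?_) (deduction ?_) hLIN
  · exact mp (orIntroR _ _) (imp_trans (weaken hyp) (or_imp hyp (imp_self δ₂)))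
  · exact mp (orIntroL _ _) (imp_trans (weaken hyp) (or_imp (imp_self δ₁) hyp))
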